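/- Let X be an infinite set with the discrete topology, G the group of all permutations of X acting on OnePoint X = X ∪ {∞} (fixing ∞), and E the closure of {k ↦ g•k : g ∈ G} in (OnePoint X) → (OnePoint X) with the product topology. Then every element f ∈ E is a continuous self-map of OnePoint X, and consequently composition E × E → E is separately continuous, so that E is a compact semitopological monoid under composition. -/
import Mathlib


/-- The canonical action of a permutation of `X` on the one-point compactification
`OnePoint X`, fixing the point at infinity. -/
def permOnePoint {X : Type*} (g : Equiv.Perm X) : OnePoint X → OnePoint X :=
  fun k => OnePoint.rec OnePoint.infty (fun x => ((g x : X) : OnePoint X)) k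

/-- The Ellis compactification of the permutation group of a discrete space `X` from its
action on `OnePoint X`: the closure of the set of extended permutations in
`(OnePoint X) → (OnePoint X)` with the product topology. -/
def ellisPerm (X : Type*) [TopologicalSpace X] : Set (OnePoint X → OnePoint X) :=
  closure {f : OnePoint X → OnePoint X | ∃ g : Equiv.Perm X, f = permOnePoint g}

section Aux

@[simp] lemma permOnePoint_infty {X : Type*} (g : Equiv.Perm X) :
    permOnePoint g OnePoint.infty = OnePoint.infty := rfl

@[simp] lemma permOnePoint_coe {X : Type*} (g : Equiv.Perm X) (x : X) :
    permOnePoint g (x : OnePoint X) = ((g x : X) : OnePoint X) := rfl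

lemma permOnePoint_injective {X : Type*} (g : Equiv.Perm X) :
    Function.Injective (permOnePoint g) := by
  intro x y h
  induction x using OnePoint.rec <;> induction y using OnePoint.rec <;>
    simp_all [OnePoint.coe_eq_coe, OnePoint.coe_ne_infty, OnePoint.infty_ne_coe,
      (OnePoint.coe_ne_infty _).symm]

variable {X : Type*} [TopologicalSpace X] [DiscreteTopology X]

lemma ellisPerm_infty_fixed {f : OnePoint X → OnePoint X} (hf : f ∈ ellisPerm X) :
    f OnePoint.infty = OnePoint.infty := by
  have hcl : IsClosed {F : OnePoint X → OnePoint X | F OnePoint.infty = OnePoint.infty} :=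
    isClosed_singleton.preimage (continuous_apply OnePoint.infty)
  have := closure_minimal (s := {f : OnePoint X → OnePoint X | ∃ g : Equiv.Perm X, f = permOnePoint g})
    (fun F hF => by obtain ⟨g, rfl⟩ := hF; exact permOnePoint_infty g) hcl
  exact this hf

lemma ellisPerm_fiber_subsingleton {f : OnePoint X → OnePoint X} (hf : f ∈ ellisPerm X)
    (a : X) : (f ⁻¹' {(a : OnePoint X)}).Subsingleton := by
  intro x hx y hy
  by_contra hxy
  have haopen : IsOpen {(a : OnePoint X)} := by
    have := OnePoint.isOpen_image_coe (X := X) (s := {a})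
    simpa [Set.image_singleton] using this.2 (isOpen_discrete _)
  set U : Set (OnePoint X → OnePoint X) :=
    ((fun F : OnePoint X → OnePoint X => F x) ⁻¹' {(a : OnePoint X)}) ∩
      ((fun F : OnePoint X → OnePoint X => F y) ⁻¹' {(a : OnePoint X)}) with hUdef
  have hU : IsOpen U :=
    (haopen.preimage (continuous_apply x)).inter (haopen.preimage (continuous_apply y))
  have hfU : f ∈ U := ⟨hx, hy⟩
  obtain ⟨F, hFU, g, rfl⟩ := _root_.mem_closure_iff.mp hf _ hU hfU
  obtain ⟨hFx, hFy⟩ := hFU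
  simp only [Set.mem_preimage, Set.mem_singleton_iff] at hFx hFy
  exact hxy (permOnePoint_injective g (hFx.trans hFy.symm))

lemma ellisPerm_continuous {f : OnePoint X → OnePoint X} (hf : f ∈ ellisPerm X) :
    Continuous f := by
  rw [continuous_def]
  intro U hU
  rw [OnePoint.isOpen_def]
  refine ⟨fun hinf => ?_, isOpen_discrete _⟩
  -- need: compl of coe ⁻¹' (f ⁻¹' U) is compact in (discrete) X, i.e. finite
  rw [isCompact_iff_finite]
  have hinfU : OnePoint.infty ∈ U := by
    have := ellisPerm_infty_fixed hf
    simpa [this] using hinf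
  -- Uᶜ is a compact subset of the coe-range, so its coe-preimage K is finite.
  have hKfin : (((↑) : X → OnePoint X) ⁻¹' Uᶜ).Finite := by
    rw [← isCompact_iff_finite]
    exact ((OnePoint.isOpen_iff_of_mem' hinfU).mp hU).1
  have : (((↑) : X → OnePoint X) ⁻¹' (f ⁻¹' U))ᶜ
      ⊆ ⋃ a ∈ (((↑) : X → OnePoint X) ⁻¹' Uᶜ), ((↑) : X → OnePoint X) ⁻¹' (f ⁻¹' {(a : OnePoint X)}) := by
    intro x hx
    simp only [Set.mem_compl_iff, Set.mem_preimage] at hx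
    rcases hfx : f (x : OnePoint X) with _ | a
    · exact absurd (hfx ▸ hinfU) hx
    · have ha : a ∈ ((↑) : X → OnePoint X) ⁻¹' Uᶜ := by
        simp only [Set.mem_preimage, Set.mem_compl_iff]
        intro h
        exact hx (by rw [hfx]; exact h)
      refine Set.mem_biUnion ha ?_
      simp only [Set.mem_preimage, Set.mem_singleton_iff]
      exact hfx
  refine Set.Finite.subset (Set.Finite.biUnion hKfin fun a _ => ?_) this
  exact ((ellisPerm_fiber_subsingleton hf a).preimage OnePoint.coe_injective).finite

lemma comp_right_continuous (h : OnePoint X → OnePoint X) :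
    Continuous (fun F : OnePoint X → OnePoint X => F ∘ h) :=
  continuous_pi fun k => continuous_apply (h k)

lemma comp_left_continuous {f : OnePoint X → OnePoint X} (hf : Continuous f) :
    Continuous (fun F : OnePoint X → OnePoint X => f ∘ F) :=
  continuous_pi fun k => hf.comp (continuous_apply k)

lemma permOnePoint_comp (g g' : Equiv.Perm X) :
    permOnePoint g ∘ permOnePoint g' = permOnePoint (g'.trans g) := by
  funext k
  induction k using OnePoint.rec <;> simp [Function.comp]

lemma ellisPerm_comp_mem {f h : OnePoint X → OnePoint X}
    (hf : f ∈ ellisPerm X) (hh : h ∈ ellisPerm X) : f ∘ h ∈ ellisPerm X := by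
  set S := {f : OnePoint X → OnePoint X | ∃ g : Equiv.Perm X, f = permOnePoint g} with hS
  have step1 : ∀ g : Equiv.Perm X, permOnePoint g ∘ h ∈ ellisPerm X := by
    intro g
    have hc : Continuous (fun F : OnePoint X → OnePoint X => permOnePoint g ∘ F) :=
      comp_left_continuous (ellisPerm_continuous (subset_closure ⟨g, rfl⟩))
    have hmap : Set.MapsTo (fun F : OnePoint X → OnePoint X => permOnePoint g ∘ F) S S := by
      rintro F ⟨g', rfl⟩
      exact ⟨g'.trans g, permOnePoint_comp g g'⟩
    exact map_mem_closure hc hh hmap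
  have hc : Continuous (fun F : OnePoint X → OnePoint X => F ∘ h) := comp_right_continuous h
  have hmap : Set.MapsTo (fun F : OnePoint X → OnePoint X => F ∘ h) S (ellisPerm X) := by
    rintro F ⟨g, rfl⟩; exact step1 g
  have := map_mem_closure hc hf hmap
  simpa [ellisPerm, closure_closure] using this

end Aux

/-- Every element of the Ellis compactification `E` of the permutation group of an infinite
discrete space is a continuous self-map of `OnePoint X`; consequently composition is
separately continuous on `E`, and `E` is a compact semitopological monoid under
composition. -/
theorem ellisPerm_semitopological_monoid
    {X : Type*} [TopologicalSpace X] [DiscreteTopology X] [Infinite X] :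
    (∀ f ∈ ellisPerm X, Continuous f) ∧
    IsCompact (ellisPerm X) ∧
    id ∈ ellisPerm X ∧
    (∀ f ∈ ellisPerm X, ∀ h ∈ ellisPerm X, f ∘ h ∈ ellisPerm X) ∧
    (∀ f ∈ ellisPerm X,
      Continuous (fun h : ↥(ellisPerm X) => f ∘ (h : OnePoint X → OnePoint X)) ∧
      Continuous (fun h : ↥(ellisPerm X) => (h : OnePoint X → OnePoint X) ∘ f)) := by
  refine ⟨fun f hf => ellisPerm_continuous hf, isClosed_closure.isCompact, ?_, ?_, ?_⟩
  · refine subset_closure ⟨Equiv.refl X, ?_⟩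
    funext k; induction k using OnePoint.rec <;> simp
  · exact fun f hf h hh => ellisPerm_comp_mem hf hh
  · intro f hf
    exact ⟨(comp_left_continuous (ellisPerm_continuous hf)).comp continuous_subtype_val,
      (comp_right_continuous f).comp continuous_subtype_val⟩
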